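/- arXiv:1108.2579 — 2 statements merged into one kernel-verified Lean document; each statement's English description precedes it below -/
import Mathlib

section
/- Let m ≥ 3 be an integer and a an integer with gcd(a, m) = 1. Then the sum over k = 0, 1, ..., m−1 of C_m(a + k·m) is congruent to 0 modulo m. -/
/-- The Carmichael function `λ(m)`: the smallest positive integer `n` such that
`a ^ n ≡ 1 (mod m)` for every integer `a` coprime to `m`. -/
noncomputable def carmichael (m : ℕ) : ℕ :=
  sInf {n : ℕ | 0 < n ∧ ∀ a : ℤ, Int.gcd a m = 1 → a ^ n ≡ 1 [ZMOD (m : ℤ)]}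

/-- The Carmichael quotient `C_m(a) = (a^{λ(m)} - 1) / m`. -/
noncomputable def carQuot (m : ℕ) (a : ℤ) : ℤ := (a ^ carmichael m - 1) / m

/-!
Write `L = λ(m)`. Modulo `m²` the binomial theorem gives `(a + km)^L ≡ a^L + L a^(L-1) k m`, so
`∑_{k<m} ((a + km)^L - 1) ≡ m (a^L - 1) + L a^(L-1) m · m(m-1)/2 (mod m²)`. The first term is
divisible by `m²` because `m ∣ a^L - 1`, and the second because `L` is even: `(-1)^L ≡ 1 (mod m)`
with `m ≥ 3`. Dividing by `m` gives the claim.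
-/

theorem Int.ModEq.pow_totient {a : ℤ} {m : ℕ} (ha : Int.gcd a m = 1) :
    a ^ Nat.totient m ≡ 1 [ZMOD m] := by
  have hu : IsUnit (a : ZMod m) :=
    (ZMod.coe_int_isUnit_iff_isCoprime a m).2 (Int.isCoprime_iff_gcd_eq_one.2 ha).symm
  rw [← ZMod.intCast_eq_intCast_iff]
  push_cast
  simpa only [Units.val_pow_eq_pow_val, IsUnit.unit_spec, Units.val_one] using
    congrArg Units.val (ZMod.pow_totient hu.unit)

theorem pow_carmichael_modEq_one {m : ℕ} (hm : 0 < m) {a : ℤ} (ha : Int.gcd a m = 1) :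
    a ^ carmichael m ≡ 1 [ZMOD m] :=
  (Nat.sInf_mem (s := {n : ℕ | 0 < n ∧ ∀ a : ℤ, Int.gcd a m = 1 → a ^ n ≡ 1 [ZMOD (m : ℤ)]})
    ⟨Nat.totient m, Nat.totient_pos.2 hm, fun _ ↦ Int.ModEq.pow_totient⟩).2 a ha

theorem even_carmichael {m : ℕ} (hm : 3 ≤ m) : Even (carmichael m) := by
  by_contra hodd
  have h := pow_carmichael_modEq_one (m := m) (a := -1) (by omega) (by simp)
  rw [(Nat.not_even_iff_odd.1 hodd).neg_one_pow] at h
  have hdvd : (m : ℤ) ∣ 2 := by simpa using h.symm.dvd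
  have := Int.le_of_dvd two_pos hdvd
  omega

theorem mul_carQuot {m : ℕ} (hm : 0 < m) {a : ℤ} (ha : Int.gcd a m = 1) :
    (m : ℤ) * carQuot m a = a ^ carmichael m - 1 :=
  Int.mul_ediv_cancel' (pow_carmichael_modEq_one hm ha).symm.dvd

theorem sq_dvd_sum_add_mul_pow_sub_pow (a : ℤ) (m : ℕ) {n : ℕ} (hn : Even n) :
    (m : ℤ) ^ 2 ∣ ∑ k ∈ Finset.range m, ((a + k * m) ^ n - a ^ n) := by
  have hquadratic (k : ℕ) : (m : ℤ) ^ 2 ∣ (a + k * m) ^ n - a ^ (n - 1) * (k * m) * n - a ^ n :=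
    (pow_dvd_pow_of_dvd (dvd_mul_left _ _) 2).trans (sq_dvd_add_pow_sub_sub _ a n)
  have hgauss : (∑ k ∈ Finset.range m, (k : ℤ)) * 2 = m * ((m - 1 : ℕ) : ℤ) := by
    rw [← Nat.cast_sum, ← Nat.cast_ofNat, ← Nat.cast_mul, Finset.sum_range_id_mul_two,
      Nat.cast_mul]
  obtain ⟨t, ht⟩ := hn
  have hnt : (n : ℤ) = 2 * t := by rw [ht]; push_cast; ring
  have hlinear : ∑ k ∈ Finset.range m, a ^ (n - 1) * (k * m) * (n : ℤ)
      = (m : ℤ) ^ 2 * (a ^ (n - 1) * t * ((m - 1 : ℕ) : ℤ)) := by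
    rw [← Finset.sum_mul, ← Finset.mul_sum, ← Finset.sum_mul, hnt]
    linear_combination (a ^ (n - 1) * m * t) * hgauss
  have hsplit : ∑ k ∈ Finset.range m, ((a + k * m) ^ n - a ^ n)
      = ∑ k ∈ Finset.range m, ((a + k * m) ^ n - a ^ (n - 1) * (k * m) * n - a ^ n)
        + ∑ k ∈ Finset.range m, a ^ (n - 1) * (k * m) * (n : ℤ) := by
    rw [← Finset.sum_add_distrib]
    exact Finset.sum_congr rfl fun _ _ ↦ by ring
  rw [hsplit, hlinear]
  exact dvd_add (Finset.dvd_sum fun k _ ↦ hquadratic k) (dvd_mul_right _ _)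

theorem stmt3 (m : ℕ) (hm : 3 ≤ m) (a : ℤ) (ha : Int.gcd a m = 1) :
    ∑ k ∈ Finset.range m, carQuot m (a + (k : ℤ) * m) ≡ 0 [ZMOD (m : ℤ)] := by
  have hm0 : 0 < m := by omega
  have hsum : (m : ℤ) * ∑ k ∈ Finset.range m, carQuot m (a + (k : ℤ) * m)
      = ∑ k ∈ Finset.range m, ((a + k * m) ^ carmichael m - a ^ carmichael m)
        + m * (a ^ carmichael m - 1) := by
    rw [Finset.mul_sum, Finset.sum_congr rfl fun k _ ↦
      mul_carQuot hm0 (by rw [Int.gcd_add_mul_right_left, ha])]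
    simp only [Finset.sum_sub_distrib, Finset.sum_const, Finset.card_range, nsmul_eq_mul]
    ring
  have hsq : (m : ℤ) * m ∣ m * ∑ k ∈ Finset.range m, carQuot m (a + (k : ℤ) * m) := by
    rw [hsum, ← sq]
    refine dvd_add (sq_dvd_sum_add_mul_pow_sub_pow a m (even_carmichael hm)) ?_
    rw [sq]
    exact mul_dvd_mul_left _ (pow_carmichael_modEq_one hm0 ha).symm.dvd
  exact Int.modEq_zero_iff_dvd.2 ((mul_dvd_mul_iff_left (by positivity)).1 hsq)
end

section
/- Let m ≥ 2 be an integer and a ≥ 1 an integer with gcd(a, m) = 1. Then, as an identity of rational numbers, C_m(a) = −(a^{λ(m)} / (a·m·B_{λ(m)})) · Σ_{j=0}^{a−1} ( B_{λ(m)}(j/a) − B_{λ(m)} ), where B_n denotes the n-th Bernoulli number and B_n(x) the n-th Bernoulli polynomial. -/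
open Finset

theorem bernoulli_ne_zero_of_even {n : ℕ} (hn : Even n) (hn0 : n ≠ 0) : bernoulli n ≠ 0 := by
  obtain ⟨k, rfl⟩ := hn
  have hk : k ≠ 0 := by omega
  intro h
  have hzeta := hasSum_zeta_nat hk
  rw [two_mul, h, Rat.cast_zero, mul_zero, zero_div] at hzeta
  have := le_hasSum hzeta 1 fun j _ => by positivity
  norm_num at this

theorem bernoulliFun_ratCast (n : ℕ) (x : ℚ) :
    bernoulliFun n x = ((Polynomial.bernoulli n).eval x : ℚ) := by
  rw [bernoulliFun, Polynomial.eval_map, ← eq_ratCast (algebraMap ℚ ℝ),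
    Polynomial.eval₂_at_apply, eq_ratCast]

theorem pow_mul_sum_bernoulli_eval_div {a : ℕ} (ha : a ≠ 0) (n : ℕ) :
    (a : ℚ) ^ n * ∑ j ∈ range a, (Polynomial.bernoulli n).eval ((j : ℚ) / a) =
      a * bernoulli n := by
  have hmul := bernoulliFun_mul n ha 0
  simp only [mul_zero, zero_add, bernoulliFun_eval_zero] at hmul
  have hcast (j : ℕ) :
      bernoulliFun n (j / a) = ((Polynomial.bernoulli n).eval ((j : ℚ) / a) : ℚ) := by
    rw [← bernoulliFun_ratCast]; push_cast; rfl
  simp only [hcast] at hmul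
  have haR : (a : ℝ) ≠ 0 := Nat.cast_ne_zero.mpr ha
  field_simp at hmul
  rw [mul_comm (a : ℚ)]
  exact_mod_cast hmul.symm

theorem carmichael_spec {m : ℕ} (hm : m ≠ 0) :
    0 < carmichael m ∧ ∀ a : ℤ, Int.gcd a m = 1 → a ^ carmichael m ≡ 1 [ZMOD m] := by
  refine Nat.sInf_mem (s := {n | 0 < n ∧ ∀ a : ℤ, Int.gcd a m = 1 → a ^ n ≡ 1 [ZMOD m]})
    ⟨m.totient, Nat.totient_pos.mpr (Nat.pos_of_ne_zero hm), fun a ha => ?_⟩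
  let u := ZMod.unitOfIsCoprime a (Int.isCoprime_iff_gcd_eq_one.mpr ha)
  rw [← ZMod.intCast_eq_intCast_iff, Int.cast_pow, Int.cast_one]
  exact congrArg Units.val (ZMod.pow_totient u)

theorem dvd_two_of_odd_carmichael {m : ℕ} (hm : m ≠ 0) (hodd : Odd (carmichael m)) :
    m ∣ 2 := by
  have h := (carmichael_spec hm).2 (-1) (by simp)
  rw [hodd.neg_one_pow] at h
  exact_mod_cast (by simpa using h.dvd : (m : ℤ) ∣ 2)

theorem carmichael_two : carmichael 2 = 1 := by
  refine le_antisymm (Nat.sInf_le ⟨one_pos, fun a ha => ?_⟩) (carmichael_spec two_ne_zero).1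
  have hodd : ¬ (2 : ℤ) ∣ a := fun h2 => by
    have := Int.dvd_gcd h2 (dvd_refl (2 : ℤ))
    rw [Nat.cast_ofNat] at ha
    rw [ha] at this
    norm_num at this
  rw [pow_one, Int.ModEq]
  push_cast
  omega

theorem bernoulli_carmichael_ne_zero {m : ℕ} (hm : 2 ≤ m) : bernoulli (carmichael m) ≠ 0 := by
  have hm0 : m ≠ 0 := by omega
  rcases Nat.even_or_odd (carmichael m) with heven | hodd
  · exact bernoulli_ne_zero_of_even heven (carmichael_spec hm0).1.ne'
  · obtain rfl : m = 2 :=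
      le_antisymm (Nat.le_of_dvd two_pos (dvd_two_of_odd_carmichael hm0 hodd)) hm
    rw [carmichael_two, bernoulli_one]
    norm_num

theorem carQuot_eq_div {m : ℕ} (hm : m ≠ 0) {a : ℤ} (ha : Int.gcd a m = 1) :
    (carQuot m a : ℚ) = (a ^ carmichael m - 1) / m := by
  have hdvd : (m : ℤ) ∣ a ^ carmichael m - 1 := ((carmichael_spec hm).2 a ha).symm.dvd
  rw [carQuot, Int.cast_div hdvd (by exact_mod_cast hm)]
  push_cast; rfl

theorem stmt11_general (m : ℕ) (hm : 2 ≤ m) (a : ℕ) (ha : Nat.Coprime a m) :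
    (carQuot m a : ℚ) =
      -((a : ℚ) ^ carmichael m / ((a : ℚ) * m * bernoulli (carmichael m))) *
        ∑ j ∈ Finset.range a,
          ((Polynomial.bernoulli (carmichael m)).eval ((j : ℚ) / a) -
            bernoulli (carmichael m)) := by
  have hm0 : m ≠ 0 := by omega
  have ha0 : a ≠ 0 := by
    rintro rfl
    rw [Nat.coprime_zero_left] at ha
    omega
  have hgcd : Int.gcd a m = 1 := by rwa [Int.gcd_natCast_natCast]
  have hB := bernoulli_carmichael_ne_zero hm
  have hraabe := pow_mul_sum_bernoulli_eval_div ha0 (carmichael m)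
  rw [carQuot_eq_div hm0 hgcd, sum_sub_distrib, sum_const, card_range, nsmul_eq_mul]
  field_simp
  linear_combination hraabe

theorem stmt11 (m : ℕ) (hm : 2 ≤ m) (a : ℕ) (ha1 : 1 ≤ a) (ha : Nat.Coprime a m) :
    (carQuot m a : ℚ) =
      -((a : ℚ) ^ carmichael m / ((a : ℚ) * m * bernoulli (carmichael m))) *
        ∑ j ∈ Finset.range a,
          ((Polynomial.bernoulli (carmichael m)).eval ((j : ℚ) / a) -
            bernoulli (carmichael m)) :=
  stmt11_general m hm a ha
end
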